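/- Let Δ = Δ_0 + Δ_1 + ⋯ + Δ_k be a nef-partition of a reflexive polytope Δ ⊂ ℝ^d with dual nef-partition ∇ = ∇_0 + ⋯ + ∇_k in the dual space. Then: (i) for every nonzero lattice point u ∈ ∇_i ∩ ℤ^d one has min⟨Δ_j, u⟩ = 0 for all j ≠ i and min⟨Δ_i, u⟩ = −1; (ii) the dual of the Cayley cone satisfies σ̄∨ = ℝ_{≥0} · Conv(∇_0 + r_0*, ∇_1 + r_1*, …, ∇_k + r_k*); and (iii) Conv({u − Σ_{i=1}^k min⟨Δ_i,u⟩ e_i* : u ∈ Δ*} ∪ {e_1*, …, e_k*}) = Conv(∇_0, ∇_1 + e_1*, …, ∇_k + e_k*). -/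

import Mathlib

/-!
Write `mᵢ(y) = min⟨Δᵢ, y⟩`. These are nonpositive, add up to `min⟨Δ, y⟩`, and `y ∈ ∇ⱼ` means
`mᵢ(y) ≥ -δᵢⱼ`. At a nonzero lattice point of `Δ*` the `mᵢ` are integers whose sum lies in
`[-1, 0)`, so exactly one of them is `-1` and the others vanish; hence every vertex of `Δ*` lies
in some `∇ⱼ` and `Δ* = Conv(⋃ ∇ⱼ)`. Rescaling a convex combination from this hull gives
`y = ∑ cᵢ wᵢ` with `wᵢ ∈ ∇ᵢ`, where `cᵢ ≥ -mᵢ(y)` pointwise and both sides have the same sum, so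
`y = ∑ -mᵢ(y) wᵢ`. Part (i) is the integrality argument for a single `∇ᵢ`; for (ii) and (iii) this
decomposition writes every point of the dual Cayley cone, resp. of the lifted `Δ*`, as a
nonnegative combination of the lifted generators `(wᵢ, rᵢ*)`, resp. `(wᵢ, eᵢ*)`.
-/

open scoped Pointwise
open Set

noncomputable section

/-- The standard pairing on `ℝ^n`. -/
def pairing {n : ℕ} (x y : Fin n → ℝ) : ℝ := ∑ i, x i * y i

/-- A point of `ℝ^n` lying in the lattice `ℤ^n`. -/
def IsLatticePt {n : ℕ} (x : Fin n → ℝ) : Prop := ∀ i, ∃ z : ℤ, x i = (z : ℝ)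

/-- A lattice polytope: the convex hull of finitely many lattice points. -/
def IsLatticePolytope {n : ℕ} (P : Set (Fin n → ℝ)) : Prop :=
  ∃ S : Set (Fin n → ℝ), S.Finite ∧ (∀ x ∈ S, IsLatticePt x) ∧ P = convexHull ℝ S

/-- The dual polytope `P* = {y | ⟨x,y⟩ ≥ -1 ∀ x ∈ P}`. -/
def polarDual {n : ℕ} (P : Set (Fin n → ℝ)) : Set (Fin n → ℝ) :=
  {y | ∀ x ∈ P, -1 ≤ pairing x y}

/-- A reflexive polytope. -/
def IsReflexive {n : ℕ} (P : Set (Fin n → ℝ)) : Prop :=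
  IsLatticePolytope P ∧ (0 : Fin n → ℝ) ∈ interior P ∧ IsLatticePolytope (polarDual P)

/-- `min⟨P, u⟩ = min_{x ∈ P} ⟨x, u⟩`. -/
def minPair {n : ℕ} (P : Set (Fin n → ℝ)) (u : Fin n → ℝ) : ℝ :=
  sInf ((fun x => pairing x u) '' P)

/-- The real vector space `ℝ^d ⊕ ℝ^k`. -/
abbrev Vdk (d k : ℕ) := (Fin d → ℝ) × (Fin k → ℝ)

/-- The pairing on `ℝ^d ⊕ ℝ^k` (sum of the two standard pairings). -/
def pairingV {d k : ℕ} (x y : Vdk d k) : ℝ := pairing x.1 y.1 + pairing x.2 y.2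

def IsLatticePtV {d k : ℕ} (x : Vdk d k) : Prop := IsLatticePt x.1 ∧ IsLatticePt x.2

def IsLatticePolytopeV {d k : ℕ} (P : Set (Vdk d k)) : Prop :=
  ∃ S : Set (Vdk d k), S.Finite ∧ (∀ x ∈ S, IsLatticePtV x) ∧ P = convexHull ℝ S

def polarDualV {d k : ℕ} (P : Set (Vdk d k)) : Set (Vdk d k) :=
  {y | ∀ x ∈ P, -1 ≤ pairingV x y}

def IsReflexiveV {d k : ℕ} (P : Set (Vdk d k)) : Prop :=
  IsLatticePolytopeV P ∧ (0 : Vdk d k) ∈ interior P ∧ IsLatticePolytopeV (polarDualV P)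

/-- The Cayley cone `σ̄ = {(t₀Δ₀ + ⋯ + t_kΔ_k, t₀, …, t_k) : tᵢ ≥ 0} ⊆ ℝ^d ⊕ ℝ^{k+1}`. -/
def cayleyCone {d k : ℕ} (Δ : Fin (k+1) → Set (Fin d → ℝ)) : Set (Vdk d (k+1)) :=
  {p | (∀ i, 0 ≤ p.2 i) ∧ p.1 ∈ ∑ i, p.2 i • Δ i}

/-- The dual cone of a cone in `ℝ^d ⊕ ℝ^k`. -/
def dualConeV {d k : ℕ} (σ : Set (Vdk d k)) : Set (Vdk d k) :=
  {y | ∀ x ∈ σ, 0 ≤ pairingV x y}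

/-- The shift vectors for `Conv(∇₀, ∇₁ + e₁*, …, ∇_k + e_k*)`: no shift for the index 0,
and `eᵢ*` for i = 1, …, k. -/
def nshift {k : ℕ} : Fin (k+1) → Fin k → ℝ :=
  Fin.cases 0 (fun i => Pi.single i 1)

section Pairing

variable {n : ℕ}

theorem pairing_eq_dotProduct (x y : Fin n → ℝ) : pairing x y = x ⬝ᵥ y := rfl

theorem isLinearMap_pairing_left (u : Fin n → ℝ) : IsLinearMap ℝ (pairing · u) :=
  ⟨fun x y => add_dotProduct x y u, fun c x => smul_dotProduct c x u⟩

theorem isLinearMap_pairing_right (x : Fin n → ℝ) : IsLinearMap ℝ (pairing x) :=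
  ⟨dotProduct_add x, fun c y => dotProduct_smul c x y⟩

@[simp]
theorem pairing_zero_left (u : Fin n → ℝ) : pairing 0 u = 0 := zero_dotProduct u

theorem pairing_smul_left (t : ℝ) (x u : Fin n → ℝ) : pairing (t • x) u = t * pairing x u :=
  smul_dotProduct t x u

theorem pairing_smul_right (t : ℝ) (x u : Fin n → ℝ) : pairing x (t • u) = t * pairing x u :=
  dotProduct_smul t x u

theorem pairing_sum_left {ι : Type*} (s : Finset ι) (x : ι → Fin n → ℝ) (u : Fin n → ℝ) :
    pairing (∑ i ∈ s, x i) u = ∑ i ∈ s, pairing (x i) u :=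
  sum_dotProduct s x u

theorem pairing_sum_right {ι : Type*} (s : Finset ι) (x : Fin n → ℝ) (u : ι → Fin n → ℝ) :
    pairing x (∑ i ∈ s, u i) = ∑ i ∈ s, pairing x (u i) :=
  dotProduct_sum x s u

theorem pairing_self_pos {y : Fin n → ℝ} (hy : y ≠ 0) : 0 < pairing y y :=
  (Finset.sum_nonneg fun i _ => mul_self_nonneg (y i)).lt_of_ne' (dotProduct_self_eq_zero.not.2 hy)

theorem IsLatticePt.exists_pairing_eq_int {x y : Fin n → ℝ} (hx : IsLatticePt x)
    (hy : IsLatticePt y) : ∃ z : ℤ, pairing x y = z := by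
  choose a ha using hx
  choose b hb using hy
  exact ⟨∑ i, a i * b i, by simp [pairing, ha, hb]⟩

end Pairing

section MinPair

variable {n : ℕ} {P : Set (Fin n → ℝ)} {u : Fin n → ℝ}

theorem le_minPair (hP : P.Nonempty) {c : ℝ} (h : ∀ x ∈ P, c ≤ pairing x u) : c ≤ minPair P u :=
  le_csInf (hP.image _) (Set.forall_mem_image.2 h)

theorem minPair_smul_right {t : ℝ} (ht : 0 ≤ t) (P : Set (Fin n → ℝ)) (u : Fin n → ℝ) :
    minPair P (t • u) = t * minPair P u := by
  have : (fun x => pairing x (t • u)) '' P = t • (fun x => pairing x u) '' P := by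
    simp only [pairing_smul_right, ← Set.image_smul, Set.image_image, smul_eq_mul]
  rw [minPair, this, Real.sInf_smul_of_nonneg ht, smul_eq_mul, minPair]

theorem IsLatticePolytope.exists_isLeast (hP : IsLatticePolytope P) (hne : P.Nonempty)
    (u : Fin n → ℝ) :
    ∃ x, IsLatticePt x ∧ IsLeast ((fun y => pairing y u) '' P) (pairing x u) := by
  obtain ⟨S, hS, hSlat, rfl⟩ := hP
  obtain ⟨x, hxS, hxmin⟩ :=
    Set.exists_min_image S (pairing · u) hS (convexHull_nonempty_iff.1 hne)
  refine ⟨x, hSlat x hxS, ⟨x, subset_convexHull ℝ S hxS, rfl⟩, ?_⟩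
  rintro _ ⟨y, hy, rfl⟩
  exact convexHull_min hxmin (convex_halfSpace_ge (isLinearMap_pairing_left u) _) hy

theorem IsLatticePolytope.isLeast_minPair (hP : IsLatticePolytope P) (hne : P.Nonempty)
    (u : Fin n → ℝ) : IsLeast ((fun y => pairing y u) '' P) (minPair P u) := by
  obtain ⟨x, -, hx⟩ := hP.exists_isLeast hne u
  rwa [minPair, hx.csInf_eq]

theorem IsLatticePolytope.minPair_le (hP : IsLatticePolytope P) {x : Fin n → ℝ} (hx : x ∈ P)
    (u : Fin n → ℝ) : minPair P u ≤ pairing x u :=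
  (hP.isLeast_minPair ⟨x, hx⟩ u).2 ⟨x, hx, rfl⟩

theorem IsLatticePolytope.minPair_nonpos (hP : IsLatticePolytope P) (h0 : 0 ∈ P)
    (u : Fin n → ℝ) : minPair P u ≤ 0 := by
  simpa using hP.minPair_le h0 u

theorem IsLatticePolytope.exists_minPair_eq_int (hP : IsLatticePolytope P) (hne : P.Nonempty)
    (hu : IsLatticePt u) : ∃ z : ℤ, minPair P u = z := by
  obtain ⟨x, hx, hxmin⟩ := hP.exists_isLeast hne u
  rw [minPair, hxmin.csInf_eq]
  exact hx.exists_pairing_eq_int hu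

theorem IsLatticePolytope.minPair_le_neg_one (hP : IsLatticePolytope P) (hne : P.Nonempty)
    (hu : IsLatticePt u) (hneg : minPair P u < 0) : minPair P u ≤ -1 := by
  obtain ⟨z, hz⟩ := hP.exists_minPair_eq_int hne hu
  rw [hz] at hneg ⊢
  have : z < 0 := by exact_mod_cast hneg
  exact_mod_cast (show z ≤ -1 by omega)

theorem minPair_sum {ι : Type*} [Fintype ι] {P : ι → Set (Fin n → ℝ)}
    (hP : ∀ i, IsLatticePolytope (P i)) (hne : ∀ i, (P i).Nonempty) (u : Fin n → ℝ) :
    minPair (∑ i, P i) u = ∑ i, minPair (P i) u := by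
  refine IsLeast.csInf_eq ⟨?_, ?_⟩
  · choose x hxP hx using fun i => ((hP i).isLeast_minPair (hne i) u).1
    exact ⟨∑ i, x i, (Set.mem_fintype_sum _ _).2 ⟨x, hxP, rfl⟩, by simp [pairing_sum_left, hx]⟩
  · rintro _ ⟨_, hy, rfl⟩
    obtain ⟨y, hyP, rfl⟩ := (Set.mem_fintype_sum _ _).1 hy
    simp only [pairing_sum_left]
    exact Finset.sum_le_sum fun i _ => (hP i).minPair_le (hyP i) u

theorem IsLatticePolytope.mem_polarDual_iff (hP : IsLatticePolytope P) (hne : P.Nonempty) :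
    u ∈ polarDual P ↔ -1 ≤ minPair P u :=
  ⟨le_minPair hne, fun h _ hx => h.trans (hP.minPair_le hx u)⟩

theorem IsReflexive.minPair_neg (hP : IsReflexive P) {y : Fin n → ℝ} (hy : y ≠ 0) :
    minPair P y < 0 := by
  have hcont : Filter.Tendsto (fun t : ℝ => t • y) (nhdsWithin 0 (Set.Iio 0)) (nhds 0) :=
    (Continuous.tendsto' (by fun_prop) 0 0 (zero_smul ℝ y)).mono_left nhdsWithin_le_nhds
  obtain ⟨t, htP, ht⟩ :=
    ((hcont.eventually (mem_interior_iff_mem_nhds.1 hP.2.1)).and self_mem_nhdsWithin).exists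
  calc minPair P y ≤ pairing (t • y) y := hP.1.minPair_le htP y
    _ = t * pairing y y := pairing_smul_left t y y
    _ < 0 := mul_neg_of_neg_of_pos ht (pairing_self_pos hy)

end MinPair

section ConvexCombination

variable {E ι : Type*} [AddCommGroup E] [Module ℝ E]

theorem Convex.exists_sum_smul_eq_smul_mem {s : Set E} (hs : Convex ℝ s) (hne : s.Nonempty)
    (t : Finset ι) {c : ι → ℝ} {p : ι → E} (hc : ∀ i ∈ t, 0 ≤ c i) (hp : ∀ i ∈ t, p i ∈ s) :
    ∃ x ∈ s, ∑ i ∈ t, c i • p i = (∑ i ∈ t, c i) • x := by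
  rcases (Finset.sum_nonneg hc).eq_or_lt with h | h
  · obtain ⟨x, hx⟩ := hne
    refine ⟨x, hx, ?_⟩
    rw [← h, zero_smul]
    refine Finset.sum_eq_zero fun i hi => ?_
    rw [(Finset.sum_eq_zero_iff_of_nonneg hc).1 h.symm i hi, zero_smul]
  · refine ⟨t.centerMass c p, hs.centerMass_mem hc h hp, ?_⟩
    rw [Finset.centerMass, smul_inv_smul₀ h.ne']

theorem exists_sum_smul_of_mem_convexHull_iUnion [Fintype ι] {S : ι → Set E}
    (hS : ∀ i, Convex ℝ (S i)) (hne : ∀ i, (S i).Nonempty) {x : E}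
    (hx : x ∈ convexHull ℝ (⋃ i, S i)) :
    ∃ (c : ι → ℝ) (s : ι → E), (∀ i, 0 ≤ c i) ∧ ∑ i, c i = 1 ∧ (∀ i, s i ∈ S i) ∧
      x = ∑ i, c i • s i := by
  classical
  obtain ⟨κ, _, w, z, hw0, hw1, hz, rfl⟩ := mem_convexHull_iff_exists_fintype.1 hx
  choose ν hν using fun a => Set.mem_iUnion.1 (hz a)
  choose s hs hsum using fun i => (hS i).exists_sum_smul_eq_smul_mem (hne i)
    {a | ν a = i} (fun a _ => hw0 a) (fun a ha => (Finset.mem_filter.1 ha).2 ▸ hν a)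
  refine ⟨fun i => ∑ a with ν a = i, w a, s, fun i => Finset.sum_nonneg fun a _ => hw0 a,
    (Finset.sum_fiberwise _ ν w).trans hw1, hs, ?_⟩
  rw [← Finset.sum_fiberwise Finset.univ ν]
  exact Finset.sum_congr rfl fun i _ => hsum i

end ConvexCombination

section DualNefPart

variable {d : ℕ} {ι : Type*} [DecidableEq ι] {Δ : ι → Set (Fin d → ℝ)}

def dualNefPart (Δ : ι → Set (Fin d → ℝ)) (j : ι) : Set (Fin d → ℝ) :=
  {y | ∀ i, ∀ x ∈ Δ i, -(if i = j then (1 : ℝ) else 0) ≤ pairing x y}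

theorem convex_dualNefPart (j : ι) : Convex ℝ (dualNefPart Δ j) :=
  fun _ hy _ hz _ _ ha hb hab i x hx =>
    convex_halfSpace_ge (isLinearMap_pairing_right x) _ (hy i x hx) (hz i x hx) ha hb hab

theorem zero_mem_dualNefPart (j : ι) : 0 ∈ dualNefPart Δ j := by
  intro i x _
  rw [pairing_eq_dotProduct, dotProduct_zero]
  split_ifs <;> norm_num

theorem minPair_eq_zero_of_mem_dualNefPart {i j : ι} {v : Fin d → ℝ} (h0 : 0 ∈ Δ i)
    (hv : v ∈ dualNefPart Δ j) (hij : i ≠ j) : minPair (Δ i) v = 0 := by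
  refine IsLeast.csInf_eq ⟨⟨0, h0, pairing_zero_left v⟩, ?_⟩
  rintro _ ⟨x, hx, rfl⟩
  simpa [hij] using hv i x hx

theorem neg_one_le_minPair_of_mem_dualNefPart {j : ι} {v : Fin d → ℝ} (hne : (Δ j).Nonempty)
    (hv : v ∈ dualNefPart Δ j) : -1 ≤ minPair (Δ j) v :=
  le_minPair hne fun x hx => by simpa using hv j x hx

end DualNefPart

section NefPartition

variable {d : ℕ} {ι : Type*} [Fintype ι] {Δ : ι → Set (Fin d → ℝ)}

structure IsNefPartition (Δ : ι → Set (Fin d → ℝ)) : Prop where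
  isLatticePolytope : ∀ i, IsLatticePolytope (Δ i)
  zero_mem : ∀ i, (0 : Fin d → ℝ) ∈ Δ i
  isReflexive : IsReflexive (∑ i, Δ i)

theorem IsNefPartition.nonempty (hΔ : IsNefPartition Δ) (i : ι) : (Δ i).Nonempty :=
  ⟨0, hΔ.zero_mem i⟩

theorem IsNefPartition.zero_mem_sum (hΔ : IsNefPartition Δ) : (0 : Fin d → ℝ) ∈ ∑ i, Δ i := by
  simpa using Set.finsetSum_mem_finsetSum Finset.univ Δ 0 fun i _ => hΔ.zero_mem i

theorem IsNefPartition.minPair_sum_eq (hΔ : IsNefPartition Δ) (u : Fin d → ℝ) :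
    minPair (∑ i, Δ i) u = ∑ i, minPair (Δ i) u :=
  minPair_sum hΔ.isLatticePolytope hΔ.nonempty u

theorem IsNefPartition.mem_polarDual_iff (hΔ : IsNefPartition Δ) {u : Fin d → ℝ} :
    u ∈ polarDual (∑ i, Δ i) ↔ -1 ≤ ∑ i, minPair (Δ i) u := by
  rw [hΔ.isReflexive.1.mem_polarDual_iff ⟨0, hΔ.zero_mem_sum⟩, hΔ.minPair_sum_eq]

variable [DecidableEq ι]

theorem neg_le_minPair_sum_smul_of_mem_dualNefPart {i : ι} (hne : (Δ i).Nonempty)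
    {c : ι → ℝ} {w : ι → Fin d → ℝ} (hc : ∀ j, 0 ≤ c j) (hw : ∀ j, w j ∈ dualNefPart Δ j) :
    -c i ≤ minPair (Δ i) (∑ j, c j • w j) :=
  le_minPair hne fun x hx => by
    rw [pairing_sum_right]
    calc -c i = ∑ j, c j * -(if i = j then 1 else 0) := by simp
      _ ≤ ∑ j, pairing x (c j • w j) := Finset.sum_le_sum fun j _ => by
        rw [pairing_smul_right]
        exact mul_le_mul_of_nonneg_left (hw j i x hx) (hc j)

namespace IsNefPartition

variable (hΔ : IsNefPartition Δ)
include hΔ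

theorem minPair_sum_eq_of_mem_dualNefPart {j : ι} {v : Fin d → ℝ} (hv : v ∈ dualNefPart Δ j) :
    minPair (∑ i, Δ i) v = minPair (Δ j) v := by
  rw [hΔ.minPair_sum_eq, Finset.sum_eq_single j
    (fun i _ hij => minPair_eq_zero_of_mem_dualNefPart (hΔ.zero_mem i) hv hij) (by simp)]

theorem dualNefPart_subset_polarDual (j : ι) : dualNefPart Δ j ⊆ polarDual (∑ i, Δ i) :=
  fun _ hv => hΔ.isReflexive.1.mem_polarDual_iff ⟨0, hΔ.zero_mem_sum⟩ |>.2 <| by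
    rw [hΔ.minPair_sum_eq_of_mem_dualNefPart hv]
    exact neg_one_le_minPair_of_mem_dualNefPart (hΔ.nonempty j) hv

theorem eq_zero_of_mem_dualNefPart {j : ι} {v : Fin d → ℝ} (hv : v ∈ dualNefPart Δ j)
    (h : minPair (Δ j) v = 0) : v = 0 := by
  by_contra hv0
  have := hΔ.isReflexive.minPair_neg hv0
  rw [hΔ.minPair_sum_eq_of_mem_dualNefPart hv, h] at this
  exact this.false

theorem minPair_eq_neg_one_of_mem_dualNefPart {j : ι} {v : Fin d → ℝ}
    (hv : v ∈ dualNefPart Δ j) (hvlat : IsLatticePt v) (hv0 : v ≠ 0) : minPair (Δ j) v = -1 := by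
  have hneg := hΔ.isReflexive.minPair_neg hv0
  rw [hΔ.minPair_sum_eq_of_mem_dualNefPart hv] at hneg
  exact ((hΔ.isLatticePolytope j).minPair_le_neg_one (hΔ.nonempty j) hvlat hneg).antisymm
    (neg_one_le_minPair_of_mem_dualNefPart (hΔ.nonempty j) hv)

theorem exists_mem_dualNefPart_of_isLatticePt {s : Fin d → ℝ} (hslat : IsLatticePt s)
    (hs0 : s ≠ 0) (hs : s ∈ polarDual (∑ i, Δ i)) : ∃ i, s ∈ dualNefPart Δ i := by
  set m := fun i => minPair (Δ i) s
  have hm : ∀ i ∈ Finset.univ, 0 ≤ -m i := fun i _ =>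
    neg_nonneg.2 ((hΔ.isLatticePolytope i).minPair_nonpos (hΔ.zero_mem i) s)
  have hlow : ∑ i, -m i ≤ 1 := by
    rw [Finset.sum_neg_distrib, neg_le]
    exact hΔ.mem_polarDual_iff.1 hs
  have hneg : ∑ _i : ι, (0 : ℝ) < ∑ i, -m i := by
    rw [Finset.sum_neg_distrib, ← hΔ.minPair_sum_eq, Finset.sum_const_zero]
    exact neg_pos.2 (hΔ.isReflexive.minPair_neg hs0)
  obtain ⟨i, -, hi⟩ := Finset.exists_lt_of_sum_lt hneg
  have hi1 : m i ≤ -1 :=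
    (hΔ.isLatticePolytope i).minPair_le_neg_one (hΔ.nonempty i) hslat (neg_pos.1 hi)
  refine ⟨i, fun l x hx => le_trans ?_ ((hΔ.isLatticePolytope l).minPair_le hx s)⟩
  by_cases hl : l = i
  · subst hl
    have := Finset.single_le_sum hm (Finset.mem_univ l)
    simp only [if_true]
    linarith
  · have := Finset.add_le_sum hm (Finset.mem_univ l) (Finset.mem_univ i) hl
    simp only [hl, if_false, neg_zero]
    linarith

theorem polarDual_subset_convexHull_iUnion_dualNefPart [Nonempty ι] :
    polarDual (∑ i, Δ i) ⊆ convexHull ℝ (⋃ i, dualNefPart Δ i) := by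
  obtain ⟨S, -, hSlat, hS⟩ := hΔ.isReflexive.2.2
  rw [hS]
  refine convexHull_mono fun s hs => Set.mem_iUnion.2 ?_
  obtain rfl | hs0 := eq_or_ne s 0
  · exact ⟨Classical.arbitrary ι, zero_mem_dualNefPart _⟩
  · exact hΔ.exists_mem_dualNefPart_of_isLatticePt (hSlat s hs) hs0
      (hS ▸ subset_convexHull ℝ S hs)

theorem exists_eq_sum_neg_minPair_smul [Nonempty ι] (y : Fin d → ℝ) :
    ∃ w : ι → Fin d → ℝ, (∀ i, w i ∈ dualNefPart Δ i) ∧ y = ∑ i, -minPair (Δ i) y • w i := by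
  obtain rfl | hy := eq_or_ne y 0
  · exact ⟨0, zero_mem_dualNefPart, by simp⟩
  set r := -minPair (∑ i, Δ i) y with hr_def
  have hr : 0 < r := neg_pos.2 (hΔ.isReflexive.minPair_neg hy)
  have hy' : r⁻¹ • y ∈ polarDual (∑ i, Δ i) := by
    rw [hΔ.isReflexive.1.mem_polarDual_iff ⟨0, hΔ.zero_mem_sum⟩,
      minPair_smul_right (inv_nonneg.2 hr.le), ← neg_neg (minPair _ y), ← hr_def, mul_neg,
      inv_mul_cancel₀ hr.ne']
  obtain ⟨c, w, hc, hc1, hw, hyc⟩ := exists_sum_smul_of_mem_convexHull_iUnion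
    convex_dualNefPart (fun _ => ⟨0, zero_mem_dualNefPart _⟩)
    (hΔ.polarDual_subset_convexHull_iUnion_dualNefPart hy')
  have hyw : y = ∑ i, (r * c i) • w i := by
    rw [← smul_inv_smul₀ hr.ne' y, hyc, Finset.smul_sum]
    simp only [smul_smul]
  have hle : ∀ i ∈ Finset.univ, -minPair (Δ i) y ≤ r * c i := fun i _ => by
    rw [neg_le, hyw]
    exact neg_le_minPair_sum_smul_of_mem_dualNefPart (hΔ.nonempty i)
      (fun j => mul_nonneg hr.le (hc j)) hw
  have hsum : ∑ i, -minPair (Δ i) y = ∑ i, r * c i := by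
    rw [← Finset.mul_sum, hc1, mul_one, Finset.sum_neg_distrib, hr_def, hΔ.minPair_sum_eq]
  refine ⟨w, hw, hyw.trans (Finset.sum_congr rfl fun i hi => ?_)⟩
  rw [(Finset.sum_eq_sum_iff_of_le hle).1 hsum i hi]

end IsNefPartition

end NefPartition

section Cayley

variable {d k : ℕ}

theorem isLinearMap_pairingV_right (x : Vdk d k) : IsLinearMap ℝ (pairingV x) where
  map_add y z := by
    simp only [pairingV, Prod.fst_add, Prod.snd_add, pairing_eq_dotProduct, dotProduct_add]
    ring
  map_smul c y := by
    simp only [pairingV, Prod.smul_fst, Prod.smul_snd, pairing_smul_right, smul_eq_mul]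
    ring

theorem convex_dualConeV (σ : Set (Vdk d k)) : Convex ℝ (dualConeV σ) :=
  fun _ hy _ hz _ _ ha hb hab x hx =>
    convex_halfSpace_ge (isLinearMap_pairingV_right x) 0 (hy x hx) (hz x hx) ha hb hab

theorem smul_mem_dualConeV {σ : Set (Vdk d k)} {t : ℝ} (ht : 0 ≤ t) {y : Vdk d k}
    (hy : y ∈ dualConeV σ) : t • y ∈ dualConeV σ := fun x hx => by
  rw [(isLinearMap_pairingV_right x).map_smul, smul_eq_mul]
  exact mul_nonneg ht (hy x hx)

variable {Δ : Fin (k+1) → Set (Fin d → ℝ)}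

theorem mk_single_mem_cayleyCone (h0 : ∀ i, (0 : Fin d → ℝ) ∈ Δ i) {i : Fin (k+1)}
    {x : Fin d → ℝ} (hx : x ∈ Δ i) : ((x, Pi.single i 1) : Vdk d (k+1)) ∈ cayleyCone Δ := by
  refine ⟨fun j => by simp [Pi.single_apply, apply_ite],
    (Set.mem_fintype_sum _ _).2 ⟨Pi.single i x, fun j => ?_, by simp⟩⟩
  rcases eq_or_ne j i with rfl | hj
  · simpa using hx
  · simpa [hj] using Set.zero_mem_smul_set (a := (0 : ℝ)) (h0 j)

theorem mem_dualConeV_cayleyCone_iff (hlat : ∀ i, IsLatticePolytope (Δ i))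
    (h0 : ∀ i, (0 : Fin d → ℝ) ∈ Δ i) {y : Vdk d (k+1)} :
    y ∈ dualConeV (cayleyCone Δ) ↔ ∀ i, 0 ≤ y.2 i ∧ -y.2 i ≤ minPair (Δ i) y.1 := by
  constructor
  · intro hy i
    have key : ∀ x ∈ Δ i, 0 ≤ pairing x y.1 + y.2 i := fun x hx => by
      simpa [pairingV, pairing_eq_dotProduct] using hy _ (mk_single_mem_cayleyCone h0 hx)
    exact ⟨by simpa using key 0 (h0 i),
      le_minPair ⟨0, h0 i⟩ fun x hx => by linarith [key x hx]⟩
  · rintro h p ⟨hp2, hp1⟩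
    obtain ⟨g, hg, hgp⟩ := (Set.mem_fintype_sum _ _).1 hp1
    choose ξ hξ hξg using fun j => Set.mem_smul_set.1 (hg j)
    have hterm : ∀ j ∈ Finset.univ, -(p.2 j * y.2 j) ≤ pairing (g j) y.1 := fun j _ => by
      rw [← hξg j, pairing_smul_left, ← mul_neg]
      exact mul_le_mul_of_nonneg_left ((h j).2.trans ((hlat j).minPair_le (hξ j) y.1)) (hp2 j)
    have := Finset.sum_le_sum hterm
    rw [Finset.sum_neg_distrib, ← pairing_sum_left] at this
    change 0 ≤ pairing p.1 y.1 + ∑ j, p.2 j * y.2 j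
    rw [← hgp]
    linarith

theorem IsNefPartition.exists_eq_sum_smul_mk_single (hΔ : IsNefPartition Δ) {y : Vdk d (k+1)}
    (hy : ∀ i, -minPair (Δ i) y.1 ≤ y.2 i) :
    ∃ v : Fin (k+1) → Fin d → ℝ, (∀ i, v i ∈ dualNefPart Δ i) ∧
      y = ∑ i, y.2 i • ((v i, Pi.single i 1) : Vdk d (k+1)) := by
  have hm : ∀ i, 0 ≤ -minPair (Δ i) y.1 :=
    fun i => neg_nonneg.2 ((hΔ.isLatticePolytope i).minPair_nonpos (hΔ.zero_mem i) _)
  obtain ⟨w, hw, hyw⟩ := hΔ.exists_eq_sum_neg_minPair_smul y.1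
  -- when `y.2 i = 0` also `minPair (Δ i) y.1 = 0`, so the junk value `0 / 0 = 0` is harmless
  refine ⟨fun i => (-minPair (Δ i) y.1 / y.2 i) • w i, fun i =>
    (convex_dualNefPart i).smul_mem_of_zero_mem (zero_mem_dualNefPart i) (hw i)
      ⟨div_nonneg (hm i) ((hm i).trans (hy i)), div_le_one_of_le₀ (hy i) ((hm i).trans (hy i))⟩,
    Prod.ext ?_ ?_⟩
  · rw [Prod.fst_sum]
    refine hyw.trans (Finset.sum_congr rfl fun i _ => ?_)
    rw [Prod.smul_fst, smul_smul, mul_div_cancel_of_imp' fun h => le_antisymm (h ▸ hy i) (hm i)]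
  · simp only [Prod.snd_sum, Prod.smul_snd, ← Pi.single_smul', smul_eq_mul, mul_one]
    exact (Finset.univ_sum_single y.2).symm

theorem IsNefPartition.dualConeV_cayleyCone (hΔ : IsNefPartition Δ) :
    dualConeV (cayleyCone Δ) =
      {y : Vdk d (k+1) | ∃ t : ℝ, 0 ≤ t ∧ ∃ x ∈ convexHull ℝ
          (⋃ i : Fin (k+1), (fun u => ((u, Pi.single i 1) : Vdk d (k+1))) '' dualNefPart Δ i),
        y = t • x} := by
  set S := ⋃ i : Fin (k+1), (fun u => ((u, Pi.single i 1) : Vdk d (k+1))) '' dualNefPart Δ i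
  have hS : ∀ {i v}, v ∈ dualNefPart Δ i → ((v, Pi.single i 1) : Vdk d (k+1)) ∈ convexHull ℝ S :=
    fun hv => subset_convexHull ℝ S (Set.mem_iUnion.2 ⟨_, Set.mem_image_of_mem _ hv⟩)
  have hdual := fun {y} => mem_dualConeV_cayleyCone_iff (y := y) hΔ.isLatticePolytope hΔ.zero_mem
  ext y
  constructor
  · intro hy
    obtain ⟨v, hv, hyv⟩ := hΔ.exists_eq_sum_smul_mk_single fun i => neg_le.1 (hdual.1 hy i).2
    obtain ⟨x, hx, hxy⟩ := (convex_convexHull ℝ S).exists_sum_smul_eq_smul_mem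
      ⟨_, hS (zero_mem_dualNefPart 0)⟩ Finset.univ (fun i _ => (hdual.1 hy i).1)
      (fun i _ => hS (hv i))
    exact ⟨_, Finset.sum_nonneg fun i _ => (hdual.1 hy i).1, x, hx, hyv.trans hxy⟩
  · rintro ⟨t, ht, x, hx, rfl⟩
    refine smul_mem_dualConeV ht (convexHull_min ?_ (convex_dualConeV _) hx)
    rintro _ ⟨_, ⟨i, rfl⟩, v, hv, rfl⟩
    refine hdual.2 fun j => ⟨?_, le_minPair ⟨0, hΔ.zero_mem j⟩ fun x hx => ?_⟩
    · simp [Pi.single_apply, apply_ite]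
    · simpa [Pi.single_apply] using hv j x hx

end Cayley

section NshiftHull

variable {d k : ℕ}

@[simp]
theorem nshift_zero : (nshift 0 : Fin k → ℝ) = 0 := rfl

@[simp]
theorem nshift_succ (i : Fin k) : (nshift i.succ : Fin k → ℝ) = Pi.single i 1 := rfl

theorem sum_smul_nshift (c : Fin (k+1) → ℝ) :
    ∑ j, c j • (nshift j : Fin k → ℝ) = fun i => c i.succ := by
  simp only [Fin.sum_univ_succ, nshift_zero, smul_zero, zero_add, nshift_succ, ← Pi.single_smul',
    smul_eq_mul, mul_one]
  exact Finset.univ_sum_single _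

def polarDualLift (Δ : Fin (k+1) → Set (Fin d → ℝ)) : Set (Vdk d k) :=
  (fun u => ((u, fun i : Fin k => -(minPair (Δ i.succ) u)) : Vdk d k)) '' polarDual (∑ i, Δ i) ∪
    ⋃ i : Fin k, {(((0 : Fin d → ℝ), Pi.single i 1) : Vdk d k)}

def dualNefLift (Δ : Fin (k+1) → Set (Fin d → ℝ)) : Set (Vdk d k) :=
  ⋃ i : Fin (k+1), (fun u => ((u, nshift i) : Vdk d k)) '' dualNefPart Δ i

variable {Δ : Fin (k+1) → Set (Fin d → ℝ)}

theorem mk_mem_polarDualLift {u : Fin d → ℝ} (hu : u ∈ polarDual (∑ i, Δ i)) :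
    ((u, fun i : Fin k => -minPair (Δ i.succ) u) : Vdk d k) ∈ polarDualLift Δ :=
  Or.inl ⟨u, hu, rfl⟩

theorem mk_single_mem_polarDualLift (i : Fin k) :
    (((0 : Fin d → ℝ), Pi.single i 1) : Vdk d k) ∈ polarDualLift Δ :=
  Or.inr (Set.mem_iUnion.2 ⟨i, rfl⟩)

theorem mk_mem_dualNefLift {j : Fin (k+1)} {v : Fin d → ℝ} (hv : v ∈ dualNefPart Δ j) :
    ((v, nshift j) : Vdk d k) ∈ dualNefLift Δ :=
  Set.mem_iUnion.2 ⟨j, Set.mem_image_of_mem _ hv⟩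

variable (hΔ : IsNefPartition Δ)
include hΔ

theorem IsNefPartition.polarDualLift_subset_convexHull :
    polarDualLift Δ ⊆ convexHull ℝ (dualNefLift Δ) := by
  have h0 : (0 : Vdk d k) ∈ convexHull ℝ (dualNefLift Δ) :=
    subset_convexHull ℝ _ (mk_mem_dualNefLift (zero_mem_dualNefPart 0))
  rintro _ (⟨u, hu, rfl⟩ | hp)
  · have hm : ∀ j, 0 ≤ -minPair (Δ j) u :=
      fun j => neg_nonneg.2 ((hΔ.isLatticePolytope j).minPair_nonpos (hΔ.zero_mem j) _)
    obtain ⟨w, hw, huw⟩ := hΔ.exists_eq_sum_neg_minPair_smul u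
    obtain ⟨x, hx, hsum⟩ := (convex_convexHull ℝ _).exists_sum_smul_eq_smul_mem ⟨0, h0⟩
      Finset.univ (fun j _ => hm j) (fun j _ => subset_convexHull ℝ _ (mk_mem_dualNefLift (hw j)))
    have hux : ((u, fun i : Fin k => -minPair (Δ i.succ) u) : Vdk d k) =
        ∑ j, -minPair (Δ j) u • ((w j, nshift j) : Vdk d k) :=
      Prod.ext (by simpa [Prod.fst_sum] using huw)
        (by simp only [Prod.snd_sum, Prod.smul_snd, sum_smul_nshift])
    dsimp only
    rw [hux, hsum]
    refine (convex_convexHull ℝ _).smul_mem_of_zero_mem h0 hx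
      ⟨Finset.sum_nonneg fun j _ => hm j, ?_⟩
    rw [Finset.sum_neg_distrib, neg_le]
    exact hΔ.mem_polarDual_iff.1 hu
  · obtain ⟨i, rfl⟩ := Set.mem_iUnion.1 hp
    simpa using subset_convexHull ℝ _ (mk_mem_dualNefLift (Δ := Δ) (zero_mem_dualNefPart i.succ))

theorem IsNefPartition.mk_succ_mem_convexHull_polarDualLift {i : Fin k} {v : Fin d → ℝ}
    (hv : v ∈ dualNefPart Δ i.succ) :
    ((v, Pi.single i 1) : Vdk d k) ∈ convexHull ℝ (polarDualLift Δ) := by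
  have hE := subset_convexHull ℝ _ (mk_single_mem_polarDualLift (Δ := Δ) i)
  set c := -minPair (Δ i.succ) v with hc_def
  have hvc_eq : minPair (Δ i.succ) v = -c := by rw [hc_def, neg_neg]
  have hc1 : c ≤ 1 := neg_le.1 (neg_one_le_minPair_of_mem_dualNefPart (hΔ.nonempty _) hv)
  obtain hc0 | hc : 0 = c ∨ 0 < c := (neg_nonneg.2 ((hΔ.isLatticePolytope i.succ).minPair_nonpos
    (hΔ.zero_mem _) v)).eq_or_lt
  · rwa [hΔ.eq_zero_of_mem_dualNefPart hv (by rw [hvc_eq, ← hc0, neg_zero])]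
  have hmin : ∀ l : Fin k, -minPair (Δ l.succ) (c⁻¹ • v) = (Pi.single i 1 : Fin k → ℝ) l :=
    fun l => by
      rw [minPair_smul_right (inv_nonneg.2 hc.le)]
      rcases eq_or_ne l i with rfl | hl
      · rw [Pi.single_eq_same, hvc_eq, mul_neg, neg_neg, inv_mul_cancel₀ hc.ne']
      · rw [Pi.single_eq_of_ne hl, minPair_eq_zero_of_mem_dualNefPart (hΔ.zero_mem _) hv
          (Fin.succ_injective _ |>.ne hl), mul_zero, neg_zero]
  have hmem : c⁻¹ • v ∈ polarDual (∑ i, Δ i) := by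
    rw [hΔ.isReflexive.1.mem_polarDual_iff ⟨0, hΔ.zero_mem_sum⟩,
      minPair_smul_right (inv_nonneg.2 hc.le), hΔ.minPair_sum_eq_of_mem_dualNefPart hv,
      hvc_eq, mul_neg, inv_mul_cancel₀ hc.ne']
  have hvc : ((c⁻¹ • v, Pi.single i 1) : Vdk d k) ∈ convexHull ℝ (polarDualLift Δ) := by
    simpa [hmin] using subset_convexHull ℝ _ (mk_mem_polarDualLift hmem)
  have hseg : ((v, Pi.single i 1) : Vdk d k) =
      c • ((c⁻¹ • v, Pi.single i 1) : Vdk d k) + (1 - c) • ((0, Pi.single i 1) : Vdk d k) := by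
    refine Prod.ext ?_ ?_
    · simp [smul_inv_smul₀ hc.ne']
    · simp only [Prod.snd_add, Prod.smul_snd, ← add_smul, add_sub_cancel, one_smul]
  rw [hseg]
  exact convex_convexHull ℝ _ hvc hE hc.le (sub_nonneg.2 hc1) (add_sub_cancel _ _)

theorem IsNefPartition.dualNefLift_subset_convexHull :
    dualNefLift Δ ⊆ convexHull ℝ (polarDualLift Δ) := by
  rintro _ ⟨_, ⟨j, rfl⟩, v, hv, rfl⟩
  cases j using Fin.cases with
  | zero =>
    refine subset_convexHull ℝ _ ?_
    convert mk_mem_polarDualLift (hΔ.dualNefPart_subset_polarDual 0 hv) using 2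
    funext i
    rw [minPair_eq_zero_of_mem_dualNefPart (hΔ.zero_mem _) hv (Fin.succ_ne_zero i), neg_zero,
      nshift_zero, Pi.zero_apply]
  | succ i => simpa using hΔ.mk_succ_mem_convexHull_polarDualLift hv

theorem IsNefPartition.convexHull_polarDualLift :
    convexHull ℝ (polarDualLift Δ) = convexHull ℝ (dualNefLift Δ) :=
  (convexHull_min hΔ.polarDualLift_subset_convexHull (convex_convexHull ℝ _)).antisymm
    (convexHull_min hΔ.dualNefLift_subset_convexHull (convex_convexHull ℝ _))

end NshiftHull

/-- for a nef-partition `Δ = Δ₀ + ⋯ + Δ_k` with dual nef-partition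
`∇ = ∇₀ + ⋯ + ∇_k`: (i) minima of `Δⱼ` at nonzero lattice points of `∇ᵢ`;
(ii) `σ̄∨ = ℝ≥0·Conv(∇₀ + r₀*, …, ∇_k + r_k*)`;
(iii) `Conv({u − Σᵢ₌₁ᵏ min⟨Δᵢ,u⟩eᵢ* : u ∈ Δ*} ∪ {e₁*, …, e_k*}) = Conv(∇₀, ∇₁+e₁*, …, ∇_k+e_k*)`. -/
theorem nef_partition_dual_cayley {d k : ℕ}
    (Δ : Fin (k+1) → Set (Fin d → ℝ))
    (hlat : ∀ i, IsLatticePolytope (Δ i))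
    (h0 : ∀ i, (0 : Fin d → ℝ) ∈ Δ i)
    (hrefl : IsReflexive (∑ i, Δ i))
    -- the dual nef-partition: ∇ⱼ = {y : ⟨x,y⟩ ≥ −δᵢⱼ ∀ x ∈ Δᵢ, i = 0,…,k}
    (nabla : Fin (k+1) → Set (Fin d → ℝ))
    (hnabla : nabla = fun j =>
        {y | ∀ i, ∀ x ∈ Δ i, -(if i = j then (1 : ℝ) else 0) ≤ pairing x y}) :
    -- (i)
    (∀ i, ∀ u ∈ nabla i, IsLatticePt u → u ≠ 0 →
      (∀ j, j ≠ i → minPair (Δ j) u = 0) ∧ minPair (Δ i) u = -1) ∧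
    -- (ii) σ̄∨ = ℝ≥0 · Conv(∇₀ + r₀*, ∇₁ + r₁*, …, ∇_k + r_k*)
    (dualConeV (cayleyCone Δ) =
      {y : Vdk d (k+1) | ∃ t : ℝ, 0 ≤ t ∧ ∃ x ∈ convexHull ℝ
          (⋃ i : Fin (k+1), (fun u => ((u, Pi.single i 1) : Vdk d (k+1))) '' nabla i),
        y = t • x}) ∧
    -- (iii)
    convexHull ℝ
        ((fun u => ((u, fun i : Fin k => -(minPair (Δ i.succ) u)) : Vdk d k)) ''
            polarDual (∑ i, Δ i) ∪
          ⋃ i : Fin k, {(((0 : Fin d → ℝ), Pi.single i 1) : Vdk d k)}) =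
      convexHull ℝ (⋃ i : Fin (k+1), (fun u => ((u, nshift i) : Vdk d k)) '' nabla i) := by
  have hΔ : IsNefPartition Δ := ⟨hlat, h0, hrefl⟩
  obtain rfl : nabla = dualNefPart Δ := hnabla
  refine ⟨fun i u hu hulat hu0 => ⟨fun j hji => ?_, ?_⟩,
    hΔ.dualConeV_cayleyCone, hΔ.convexHull_polarDualLift⟩
  · exact minPair_eq_zero_of_mem_dualNefPart (h0 j) hu hji
  · exact hΔ.minPair_eq_neg_one_of_mem_dualNefPart hu hulat hu0
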